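/- Let f be a non-cuspidal, nonconstant modular form of weight k for PSL₂(ℤ) with real Fourier coefficients. Define r₀(y) = Df(iy)/[(i/y)^{k+2}·Df(i/y)] and r₁(y) = Df(1/2+iy)/[(i/(2y))^{k+2}·Df(1/2 + i/(4y))], which are real for all sufficiently small y > 0. Then as y → 0⁺, ε'_f·(1 − r₀(y)) → +∞ and ε_f·(1 − r₁(y)) → +∞; that is, r₀(y) = 1 − ε'_f·ω(1) and r₁(y) = 1 − ε_f·ω(1) as y → 0⁺. -/

import Mathlib

open Filter Topology
open scoped Classical

noncomputable section

/-- `2πi` as a complex number. -/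
def twoPiI : ℂ := 2 * Real.pi * Complex.I

/-- The upper half-plane, viewed as a subset of `ℂ`. -/
def UHP : Set ℂ := {z : ℂ | 0 < z.im}

/-- `f` is weakly modular of weight `k` for the full modular group `PSL₂(ℤ)`. -/
def IsWeaklyModular (k : ℤ) (f : ℂ → ℂ) : Prop :=
  ∀ a b c d : ℤ, a * d - b * c = 1 → ∀ z ∈ UHP,
    f (((a : ℂ) * z + b) / ((c : ℂ) * z + d)) = ((c : ℂ) * z + d) ^ k * f z

/-- `f` has the `q`-expansion with coefficients `c` on the upper half-plane,
i.e. `f z = ∑_{n ≥ 0} c n * q^n` with `q = exp(2πiz)`. -/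
def HasQExp (f : ℂ → ℂ) (c : ℕ → ℂ) : Prop :=
  ∀ z ∈ UHP, HasSum (fun n : ℕ => c n * Complex.exp (twoPiI * n * z)) (f z)

/-- A holomorphic modular form of weight `k` for `PSL₂(ℤ)` with `q`-expansion
coefficients `c`. -/
def IsModularForm (k : ℤ) (f : ℂ → ℂ) (c : ℕ → ℂ) : Prop :=
  DifferentiableOn ℂ f UHP ∧ IsWeaklyModular k f ∧ HasQExp f c

/-- The divisor power sum `σ_j(n)` (equal to `0` for `n = 0`). -/
def sigmaC (j n : ℕ) : ℂ := ∑ d ∈ n.divisors, (d : ℂ) ^ j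

/-- The normalized Eisenstein series `E_k = 1 - (2k/B_k) ∑ σ_{k-1}(n) qⁿ`
(with the conventions `E₀ = 1`). -/
def Ek (k : ℕ) : ℂ → ℂ := fun z =>
  1 - (2 * k / ((bernoulli k : ℚ) : ℂ)) *
    ∑' n : ℕ, sigmaC (k - 1) n * Complex.exp (twoPiI * n * z)

/-- The quasimodular Eisenstein series `E₂`. -/
def E2 : ℂ → ℂ := Ek 2

/-- The normalized derivation `D = (2πi)⁻¹ d/dz = q d/dq`. -/
def Dop (f : ℂ → ℂ) : ℂ → ℂ := fun z => (twoPiI)⁻¹ * deriv f z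

/-- The discriminant cusp form `Δ = q ∏ (1-qⁿ)²⁴`. -/
def Disc : ℂ → ℂ := fun z =>
  Complex.exp (twoPiI * z) * ∏' n : ℕ, (1 - Complex.exp (twoPiI * (n + 1) * z)) ^ 24

/-- The modular `j`-invariant `j = E₄³/Δ`. -/
def jfun : ℂ → ℂ := fun z => (Ek 4 z) ^ 3 / Disc z

/-- The filter of neighbourhoods of `i∞`, on `ℂ`. -/
def atImInfty : Filter ℂ := Filter.comap Complex.im Filter.atTop

/-- The finite part of the standard fundamental domain `F` of `PSL₂(ℤ)`. -/
def Fdom : Set ℂ :=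
  {z : ℂ | 0 < z.im ∧ -(1/2 : ℝ) < z.re ∧ z.re ≤ 1/2 ∧
    (z.re < 0 → 1 < ‖z‖) ∧ (0 ≤ z.re → 1 ≤ ‖z‖)}

/-- The finite part of the shifted fundamental domain `ℱ` of `PSL₂(ℤ)`. -/
def Fdom' : Set ℂ :=
  {z : ℂ | 0 < z.im ∧ 0 ≤ z.re ∧ z.re < 1 ∧
    (z.re ≤ 1/2 → 1 ≤ ‖z‖) ∧ (1/2 < z.re → 1 < ‖z - 1‖)}

/-- `f` is a quasimodular form of weight `k` and depth at most `p` for `PSL₂(ℤ)`: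
`f = ∑_{i ≤ p} f_i E₂^i` with `f_i` a modular form of weight `k - 2i`. -/
def IsQuasimodular (k : ℤ) (p : ℕ) (f : ℂ → ℂ) : Prop :=
  ∃ (g : ℕ → ℂ → ℂ) (c : ℕ → ℕ → ℂ),
    (∀ i ≤ p, IsModularForm (k - 2 * i) (g i) (c i)) ∧
    ∀ z ∈ UHP, f z = ∑ i ∈ Finset.range (p + 1), g i z * E2 z ^ i

/-- `f` is a quasimodular form of weight `k` and depth at most `p` all of whose
Fourier coefficients are real (each component `f_i` has real coefficients). -/
def IsQuasimodularR (k : ℤ) (p : ℕ) (f : ℂ → ℂ) : Prop :=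
  ∃ (g : ℕ → ℂ → ℂ) (c : ℕ → ℕ → ℝ),
    (∀ i ≤ p, IsModularForm (k - 2 * i) (g i) (fun n => ((c i n : ℝ) : ℂ))) ∧
    ∀ z ∈ UHP, f z = ∑ i ∈ Finset.range (p + 1), g i z * E2 z ^ i

/-- `f` is a quasimodular form of weight `k` and depth exactly `p`. -/
def IsQuasimodularDepth (k : ℤ) (p : ℕ) (f : ℂ → ℂ) : Prop :=
  ∃ (g : ℕ → ℂ → ℂ) (c : ℕ → ℕ → ℂ),
    (∀ i ≤ p, IsModularForm (k - 2 * i) (g i) (c i)) ∧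
    (∀ z ∈ UHP, f z = ∑ i ∈ Finset.range (p + 1), g i z * E2 z ^ i) ∧
    ∃ z ∈ UHP, g p z ≠ 0

/-- `ℓ = dim S_k`, i.e. `k = 12ℓ + k'` with `k' ∈ {0,4,6,8,10,14}`. -/
def ell (k : ℕ) : ℕ := if k % 12 = 2 then k / 12 - 1 else k / 12

/-- `k' ∈ {0,4,6,8,10,14}` with `k = 12ℓ + k'`. -/
def kres (k : ℕ) : ℕ := k - 12 * ell k

/-- `z` and `w` are `PSL₂(ℤ)`-equivalent. -/
def ModEquiv (z w : ℂ) : Prop :=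
  ∃ a b c d : ℤ, a * d - b * c = 1 ∧ ((a : ℂ) * z + b) / ((c : ℂ) * z + d) = w

/-- The ramification index `e_z`: `2` at points equivalent to `i`, `3` at points
equivalent to `ρ = e^{iπ/3}`, and `1` otherwise. -/
def eWeight (z : ℂ) : ℚ :=
  if ModEquiv z Complex.I then 2
  else if ModEquiv z (Complex.exp (Real.pi * Complex.I / 3)) then 3
  else 1

/-- The order of vanishing of `f` at `z` (junk value `0` if `f` vanishes to
infinite order at `z`). -/
def zorder (f : ℂ → ℂ) (z : ℂ) : ℕ := sInf {n : ℕ | iteratedDeriv n f z ≠ 0}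

/-- `f` is the basis element `f_{k,m}` of the space of weakly holomorphic modular
forms of weight `k`: it is weakly modular of weight `k`, holomorphic on `ℍ`, and has
`q`-expansion `q^{-m} + O(q^{ℓ+1})` with coefficients `c`. -/
def IsGapForm (k : ℕ) (m : ℤ) (f : ℂ → ℂ) (c : ℤ → ℂ) : Prop :=
  DifferentiableOn ℂ f UHP ∧ IsWeaklyModular k f ∧
  (∀ z ∈ UHP, HasSum (fun n : ℕ => c (-m + n) * Complex.exp (twoPiI * ((-m + n : ℤ) : ℂ) * z)) (f z)) ∧
  c (-m) = 1 ∧ (∀ n : ℤ, -m < n → n ≤ (ell k : ℤ) → c n = 0)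

/-- The kernel function `H₁(τ,z)` of Duke–Jenkins type, for weight `k` and index `m`. -/
def H1 (k : ℕ) (m : ℤ) (τ z : ℂ) : ℂ :=
  -(1 / twoPiI) * (Disc z ^ ell k / (Disc τ ^ ell k * Ek (kres k) τ)) *
    ((ell k : ℂ) * E2 z * Ek (kres k) z + Dop (Ek (kres k)) z) *
    (deriv jfun τ / (jfun τ - jfun z)) * Complex.exp (-(twoPiI * m * τ))

/-- The kernel function `H₂(τ,z)`, for weight `k` and index `m`. -/
def H2 (k : ℕ) (m : ℤ) (τ z : ℂ) : ℂ :=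
  (1 / (4 * (Real.pi : ℂ) ^ 2)) *
    (Disc z ^ ell k * Ek (kres k) z / (Disc τ ^ ell k * Ek (kres k) τ)) *
    (deriv jfun z * deriv jfun τ / (jfun τ - jfun z) ^ 2) * Complex.exp (-(twoPiI * m * τ))

/-- The kernel function `H(τ,z) = H₁(τ,z) + H₂(τ,z)`. -/
def Hfun (k : ℕ) (m : ℤ) (τ z : ℂ) : ℂ := H1 k m τ z + H2 k m τ z

end

/-!
Let `γ = (a b; c d)` be `S` for `r₀` and `(1 -1; 2 -1)` for `r₁`. It maps `iy`, resp. `1/2 + iy`,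
to `i/y`, resp. `1/2 + i/(4y)`, where `q` is real: `q = e^{-2π/y}`, resp. `q = -e^{-π/(2y)}`.
Differentiating `f(γz) = (cz+d)^k f(z)` gives
`Df(γz) = (cz+d)^{k+2} Df(z) + (kc/2πi)(cz+d)^{k+1} f(z)`, so for even `k`
`1 - r = (kc/2πi)(cz+d) f(γz)/Df(γz) = C y P(q)/Q(q)` with `C > 0`, `P(q) = ∑ cₙqⁿ` and
`Q(q) = ∑ n cₙqⁿ`. As `y → 0⁺`, `P(q) → c₀` and `Q(q) ~ n₀ c_{n₀} q^{n₀}`, so `1 - r` is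
`c₀/(n₀ c_{n₀}) · C y e^{a n₀/y}` up to the sign of `q^{n₀}`, and tends to `±∞` as claimed.
That `C > 0`, i.e. `k ≠ 0`, holds because a form of weight `0` is constant: by the fundamental
domain, every value of its `q`-expansion on the unit disc is attained on `|q| ≤ e^{-π}`, and the
maximum modulus principle applies.
-/

open Metric

section PowerSeries

variable {𝕜 : Type*} [RCLike 𝕜] {a : ℕ → 𝕜}

theorem summable_nat_mul_norm_mul_pow
    (ha : ∀ r : ℝ, 0 < r → r < 1 → Summable fun n => ‖a n‖ * r ^ n)
    {r : ℝ} (hr₀ : 0 ≤ r) (hr₁ : r < 1) : Summable fun n : ℕ => n * ‖a n‖ * r ^ n := by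
  obtain ⟨s, hrs, hs₁⟩ := exists_between hr₁
  have hs₀ : 0 < s := by linarith
  obtain ⟨C, hC⟩ := (ha s hs₀ hs₁).tendsto_atTop_zero.bddAbove_range
  have hrs' : ‖r / s‖ < 1 := by
    rwa [Real.norm_of_nonneg (by positivity), div_lt_one hs₀]
  refine ((summable_pow_mul_geometric_of_norm_lt_one 1 hrs').mul_left C).of_nonneg_of_le
    (fun n => by positivity) fun n => ?_
  calc (n : ℝ) * ‖a n‖ * r ^ n = (‖a n‖ * s ^ n) * ((n : ℝ) ^ 1 * (r / s) ^ n) := by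
        rw [div_pow]; field_simp
    _ ≤ C * ((n : ℝ) ^ 1 * (r / s) ^ n) := by gcongr; exact hC ⟨n, rfl⟩

theorem hasDerivAt_tsum_mul_pow
    (ha : ∀ r : ℝ, 0 < r → r < 1 → Summable fun n => ‖a n‖ * r ^ n) {w : 𝕜} (hw : ‖w‖ < 1) :
    HasDerivAt (fun x => ∑' n, a n * x ^ n) (∑' n : ℕ, n * a n * w ^ (n - 1)) w := by
  obtain ⟨r, hwr, hr₁⟩ := exists_between hw
  have hr₀ : 0 < r := (norm_nonneg w).trans_lt hwr
  rw [← mem_ball_zero_iff] at hwr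
  refine hasDerivAt_tsum_of_isPreconnected (g := fun n x => a n * x ^ n)
    (g' := fun n x => n * a n * x ^ (n - 1))
    ((summable_nat_mul_norm_mul_pow ha hr₀.le hr₁).div_const r) isOpen_ball
    (convex_ball _ _).isPreconnected (fun n x _ => ?_) (fun n x hx => ?_) hwr ?_ hwr
  · exact ((hasDerivAt_pow n x).const_mul (a n)).congr_deriv (by ring)
  · rw [mem_ball_zero_iff] at hx
    have hpow : (n : ℝ) * r ^ (n - 1) = n * r ^ n / r := by
      rcases n with _ | n
      · simp
      · field_simp; simp [pow_succ]
    calc ‖(n : 𝕜) * a n * x ^ (n - 1)‖ = n * ‖a n‖ * ‖x‖ ^ (n - 1) := by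
          simp [norm_pow]
      _ ≤ n * ‖a n‖ * r ^ (n - 1) := by gcongr
      _ = n * ‖a n‖ * r ^ n / r := by rw [mul_right_comm, hpow]; ring
  · refine Summable.of_norm_bounded (ha r hr₀ hr₁) fun n => ?_
    rw [norm_mul, norm_pow]
    gcongr
    exact (mem_ball_zero_iff.mp hwr).le

theorem tsum_mul_pow_eq_pow_mul_tsum {m : ℕ} (hm : ∀ i < m, a i = 0) (x : 𝕜) :
    ∑' n, a n * x ^ n = x ^ m * ∑' n, a (n + m) * x ^ n := by
  rw [← tsum_mul_left, ← (add_left_injective m).tsum_eq]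
  · congr 1 with n
    ring
  · intro n hn
    by_cases h : m ≤ n
    · exact ⟨n - m, Nat.sub_add_cancel h⟩
    · exact absurd (by simp [hm n (by omega)]) hn

theorem tendsto_tsum_mul_pow_div_pow
    (ha : ∀ r : ℝ, 0 < r → r < 1 → Summable fun n => ‖a n‖ * r ^ n)
    {m : ℕ} (hm : ∀ i < m, a i = 0) :
    Tendsto (fun x => (∑' n, a n * x ^ n) / x ^ m) (𝓝[≠] 0) (𝓝 (a m)) := by
  have hshift : ∀ r : ℝ, 0 < r → r < 1 → Summable fun n => ‖a (n + m)‖ * r ^ n := by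
    intro r hr₀ hr₁
    refine (((summable_nat_add_iff m).2 (ha r hr₀ hr₁)).div_const (r ^ m)).congr fun n => ?_
    field_simp
    ring
  have hcont : ContinuousAt (fun x => ∑' n, a (n + m) * x ^ n) 0 :=
    (hasDerivAt_tsum_mul_pow hshift (by simp)).continuousAt
  have hzero : ∑' n, a (n + m) * (0 : 𝕜) ^ n = a m := by
    rw [tsum_eq_single 0 fun n hn => by simp [hn]]
    simp
  rw [← hzero]
  refine (hcont.tendsto.mono_left nhdsWithin_le_nhds).congr' ?_
  filter_upwards [self_mem_nhdsWithin] with x hx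
  rw [tsum_mul_pow_eq_pow_mul_tsum hm, mul_div_cancel_left₀ _ (pow_ne_zero _ hx)]

end PowerSeries

theorem twoPiI_ne_zero : twoPiI ≠ 0 := by
  simp [twoPiI, Real.pi_ne_zero, Complex.I_ne_zero]

theorem isOpen_UHP : IsOpen UHP := isOpen_lt continuous_const Complex.continuous_im

theorem exp_twoPiI_mul_nat_mul (n : ℕ) (z : ℂ) :
    Complex.exp (twoPiI * n * z) = Complex.exp (twoPiI * z) ^ n := by
  rw [← Complex.exp_nat_mul]
  ring_nf

theorem norm_exp_twoPiI_mul (z : ℂ) :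
    ‖Complex.exp (twoPiI * z)‖ = Real.exp (-(2 * Real.pi * z.im)) := by
  simp [Complex.norm_exp, twoPiI]

theorem norm_exp_twoPiI_mul_lt_one {z : ℂ} (hz : z ∈ UHP) : ‖Complex.exp (twoPiI * z)‖ < 1 := by
  have : 0 < z.im := hz
  rw [norm_exp_twoPiI_mul, Real.exp_lt_one_iff, neg_lt_zero]
  positivity

theorem I_div_mem_UHP {y : ℝ} (hy : 0 < y) : Complex.I / y ∈ UHP := by
  simpa [UHP, Complex.div_im] using hy

open Complex in
theorem exp_twoPiI_mul_I_div (y : ℝ) :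
    exp (twoPiI * (I / y)) = (Real.exp (-(2 * Real.pi / y)) : ℝ) := by
  rw [ofReal_exp]
  congr 1
  push_cast [twoPiI]
  ring_nf
  rw [I_sq]
  ring

open Complex in
theorem exp_twoPiI_mul_half_add_I_div (y : ℝ) :
    exp (twoPiI * (1 / 2 + I / (4 * y))) = (-Real.exp (-(Real.pi / (2 * y))) : ℝ) := by
  rw [ofReal_neg, ofReal_exp, ← neg_one_mul, ← exp_pi_mul_I, ← Complex.exp_add]
  congr 1
  push_cast [twoPiI]
  ring_nf
  rw [I_sq]
  ring

namespace HasQExp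

variable {f : ℂ → ℂ} {a : ℕ → ℂ}

theorem summable_norm_mul_pow (hf : HasQExp f a) {r : ℝ} (hr₀ : 0 < r) (hr₁ : r < 1) :
    Summable fun n => ‖a n‖ * r ^ n := by
  have hlog : 0 < -Real.log r := neg_pos.2 (Real.log_neg hr₀ hr₁)
  set y := 2 * Real.pi / -Real.log r
  have hy : 0 < y := div_pos Real.two_pi_pos hlog
  have hq : Complex.exp (twoPiI * (Complex.I / y)) = r := by
    rw [exp_twoPiI_mul_I_div, div_div_cancel₀ Real.two_pi_pos.ne', neg_neg, Real.exp_log hr₀]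
  have hs := (hf _ (I_div_mem_UHP hy)).summable
  simp_rw [exp_twoPiI_mul_nat_mul, hq] at hs
  simpa [abs_of_pos hr₀] using hs.norm

theorem eq_tsum (hf : HasQExp f a) {z : ℂ} (hz : z ∈ UHP) :
    f z = ∑' n, a n * Complex.exp (twoPiI * z) ^ n := by
  simp_rw [← exp_twoPiI_mul_nat_mul]
  exact (hf z hz).tsum_eq.symm

theorem dop_eq_tsum (hf : HasQExp f a) {z : ℂ} (hz : z ∈ UHP) :
    Dop f z = ∑' n : ℕ, n * a n * Complex.exp (twoPiI * z) ^ n := by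
  set q := Complex.exp (twoPiI * z)
  have hF := (hasDerivAt_tsum_mul_pow (fun r => hf.summable_norm_mul_pow)
    (norm_exp_twoPiI_mul_lt_one hz)).comp z (((hasDerivAt_id' z).const_mul twoPiI).cexp)
  have hfF : f =ᶠ[𝓝 z] (fun x => ∑' n, a n * x ^ n) ∘ fun w => Complex.exp (twoPiI * w) := by
    filter_upwards [isOpen_UHP.mem_nhds hz] with w hw
    exact hf.eq_tsum hw
  rw [Dop, (hF.congr_of_eventuallyEq hfF).deriv]
  trans q * ∑' n : ℕ, n * a n * q ^ (n - 1)
  · field_simp [twoPiI_ne_zero]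
    ring
  rw [← tsum_mul_left]
  congr 1 with (_ | n)
  · simp
  · simp only [Nat.add_sub_cancel, pow_succ]
    ring

theorem eq_ofReal_tsum {c : ℕ → ℝ} (hf : HasQExp f fun n => (c n : ℂ)) {z : ℂ} (hz : z ∈ UHP)
    {t : ℝ} (ht : Complex.exp (twoPiI * z) = t) : f z = ((∑' n, c n * t ^ n : ℝ) : ℂ) := by
  rw [hf.eq_tsum hz, ht, Complex.ofReal_tsum]
  push_cast
  rfl

theorem dop_eq_ofReal_tsum {c : ℕ → ℝ} (hf : HasQExp f fun n => (c n : ℂ)) {z : ℂ}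
    (hz : z ∈ UHP) {t : ℝ} (ht : Complex.exp (twoPiI * z) = t) :
    Dop f z = ((∑' n : ℕ, n * c n * t ^ n : ℝ) : ℂ) := by
  rw [hf.dop_eq_tsum hz, ht, Complex.ofReal_tsum]
  push_cast
  rfl

theorem tendsto_tsum_mul_pow {c : ℕ → ℝ} (hf : HasQExp f fun n => (c n : ℂ)) :
    Tendsto (fun x => ∑' n, c n * x ^ n) (𝓝[≠] 0) (𝓝 (c 0)) := by
  have hsum : ∀ r : ℝ, 0 < r → r < 1 → Summable fun n => ‖c n‖ * r ^ n := fun r hr₀ hr₁ => by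
    simpa using hf.summable_norm_mul_pow hr₀ hr₁
  simpa using tendsto_tsum_mul_pow_div_pow hsum (m := 0) (by simp)

theorem tendsto_tsum_nat_mul_mul_pow_div_pow {c : ℕ → ℝ} (hf : HasQExp f fun n => (c n : ℂ))
    {n₀ : ℕ} (hmin : ∀ i, 1 ≤ i → i < n₀ → c i = 0) :
    Tendsto (fun x => (∑' n : ℕ, n * c n * x ^ n) / x ^ n₀) (𝓝[≠] 0) (𝓝 (n₀ * c n₀)) := by
  have hsum : ∀ r : ℝ, 0 < r → r < 1 → Summable fun n => ‖c n‖ * r ^ n := fun r hr₀ hr₁ => by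
    simpa using hf.summable_norm_mul_pow hr₀ hr₁
  refine tendsto_tsum_mul_pow_div_pow (a := fun n : ℕ => n * c n) (fun r hr₀ hr₁ => ?_)
    fun i hi => ?_
  · simpa [abs_mul, mul_assoc] using summable_nat_mul_norm_mul_pow hsum hr₀.le hr₁
  · rcases i with _ | i
    · simp
    · rw [hmin _ (by omega) hi, mul_zero]

end HasQExp

theorem moebius_denom_ne_zero {a b c d : ℤ} (hdet : a * d - b * c = 1) {z : ℂ} (hz : z ∈ UHP) :
    (c : ℂ) * z + d ≠ 0 := by
  intro h
  have him : (c : ℝ) * z.im = 0 := by simpa using congrArg Complex.im h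
  have hc : c = 0 := by exact_mod_cast (mul_eq_zero.1 him).resolve_right (ne_of_gt hz)
  have hd : d = 0 := by simpa [hc] using h
  simp [hc, hd] at hdet

theorem moebius_mem_UHP {a b c d : ℤ} (hdet : a * d - b * c = 1) {z : ℂ} (hz : z ∈ UHP) :
    ((a : ℂ) * z + b) / ((c : ℂ) * z + d) ∈ UHP := by
  have hN := Complex.normSq_pos.2 (moebius_denom_ne_zero hdet hz)
  have hdet' : (a : ℝ) * d - b * c = 1 := by exact_mod_cast hdet
  show 0 < (((a : ℂ) * z + b) / ((c : ℂ) * z + d)).im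
  rw [Complex.div_im, ← sub_div]
  refine div_pos ?_ hN
  have : 0 < z.im := hz
  simp only [Complex.add_im, Complex.add_re, Complex.mul_im, Complex.mul_re, Complex.intCast_re,
    Complex.intCast_im]
  nlinarith

theorem hasDerivAt_moebius {a b c d : ℤ} (hdet : a * d - b * c = 1) {z : ℂ}
    (hz : (c : ℂ) * z + d ≠ 0) :
    HasDerivAt (fun w : ℂ => (a * w + b) / (c * w + d)) (((c : ℂ) * z + d) ^ 2)⁻¹ z := by
  have hdet' : (a : ℂ) * d - b * c = 1 := by exact_mod_cast hdet
  refine ((((hasDerivAt_id' z).const_mul (a : ℂ)).add_const (b : ℂ)).div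
    (((hasDerivAt_id' z).const_mul (c : ℂ)).add_const (d : ℂ)) hz).congr_deriv ?_
  field_simp
  linear_combination hdet'

theorem IsWeaklyModular.dop_moebius {k : ℤ} {f : ℂ → ℂ} (hf : IsWeaklyModular k f)
    (hd : DifferentiableOn ℂ f UHP) {a b c d : ℤ} (hdet : a * d - b * c = 1) {z : ℂ}
    (hz : z ∈ UHP) :
    Dop f ((a * z + b) / (c * z + d)) =
      ((c : ℂ) * z + d) ^ (k + 2) * Dop f z +
        k * c / twoPiI * ((c : ℂ) * z + d) ^ (k + 1) * f z := by
  have hw := moebius_denom_ne_zero hdet hz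
  have hdiff : ∀ x ∈ UHP, HasDerivAt f (deriv f x) x := fun x hx =>
    (hd.differentiableAt (isOpen_UHP.mem_nhds hx)).hasDerivAt
  have hlhs := (hdiff _ (moebius_mem_UHP hdet hz)).comp z (hasDerivAt_moebius hdet hw)
  have hrhs := (((hasDerivAt_zpow k _ (Or.inl hw)).comp z
    (((hasDerivAt_id' z).const_mul (c : ℂ)).add_const (d : ℂ))).mul (hdiff z hz))
  have heq : (fun x => f ((a * x + b) / (c * x + d))) =ᶠ[𝓝 z] fun x => (c * x + d) ^ k * f x := by
    filter_upwards [isOpen_UHP.mem_nhds hz] with x hx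
    exact hf a b c d hdet x hx
  have hderiv := (hlhs.congr_of_eventuallyEq heq.symm).unique hrhs
  simp only [Function.comp_apply, mul_one] at hderiv
  rw [mul_inv_eq_iff_eq_mul₀ (pow_ne_zero 2 hw)] at hderiv
  set w := (c : ℂ) * z + d
  have hk2 : w ^ (k + 2) = w ^ k * w ^ 2 := by rw [zpow_add₀ hw]; norm_cast
  have hk1 : w ^ (k + 1) = w ^ (k - 1) * w ^ 2 := by
    rw [← zpow_natCast, ← zpow_add₀ hw]; ring_nf
  rw [Dop, Dop, hderiv, hk2, hk1]
  field_simp [twoPiI_ne_zero]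
  ring

theorem IsWeaklyModular.one_sub_dop_div {k : ℕ} (hk : Even k) {f : ℂ → ℂ}
    (hf : IsWeaklyModular k f) (hd : DifferentiableOn ℂ f UHP) {a b c d : ℤ}
    (hdet : a * d - b * c = 1) {z : ℂ} (hz : z ∈ UHP)
    (hW : Dop f ((a * z + b) / (c * z + d)) ≠ 0) :
    1 - Dop f z / ((-((c : ℂ) * z + d)⁻¹) ^ (k + 2) * Dop f ((a * z + b) / (c * z + d))) =
      k * c / twoPiI * ((c : ℂ) * z + d) *
        (f ((a * z + b) / (c * z + d)) / Dop f ((a * z + b) / (c * z + d))) := by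
  have hw := moebius_denom_ne_zero hdet hz
  have htr := hf.dop_moebius hd hdet hz
  have hval := hf a b c d hdet z hz
  rw [show ((k : ℤ) + 2) = ((k + 2 : ℕ) : ℤ) by push_cast; ring,
    show ((k : ℤ) + 1) = ((k + 1 : ℕ) : ℤ) by push_cast; ring, zpow_natCast, zpow_natCast] at htr
  rw [zpow_natCast] at hval
  rw [(hk.add even_two).neg_pow, inv_pow, hval]
  set W := Dop f ((a * z + b) / (c * z + d))
  push_cast at htr
  field_simp [twoPiI_ne_zero] at htr ⊢
  linear_combination htr

section SpecialPoints

open Complex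

variable {k : ℕ} {f : ℂ → ℂ} {c : ℕ → ℝ} {y : ℝ}

theorem IsModularForm.one_sub_dop_div_I_mul (hk : Even k) (hf : IsModularForm k f fun n => c n)
    (hy : 0 < y) (hQ : ∑' n : ℕ, n * c n * Real.exp (-(2 * Real.pi / y)) ^ n ≠ 0) :
    1 - Dop f (I * y) / ((I / y) ^ (k + 2) * Dop f (I / y)) =
      (k / (2 * Real.pi) * y * ((∑' n, c n * Real.exp (-(2 * Real.pi / y)) ^ n) /
        ∑' n : ℕ, n * c n * Real.exp (-(2 * Real.pi / y)) ^ n) : ℝ) := by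
  obtain ⟨hd, hw, hq⟩ := hf
  have hy' : (y : ℂ) ≠ 0 := ofReal_ne_zero.2 hy.ne'
  have hz : I * y ∈ UHP := by simpa [UHP] using hy
  have hS : ((0 : ℤ) * (I * y) + (-1 : ℤ) : ℂ) / ((1 : ℤ) * (I * y) + (0 : ℤ)) = I / y := by
    push_cast
    field_simp
    ring_nf
    simp
  have hden : -(((1 : ℤ) : ℂ) * (I * y) + (0 : ℤ))⁻¹ = I / y := by
    push_cast
    field_simp
    ring_nf
    simp
  have hval := hq.eq_ofReal_tsum (I_div_mem_UHP hy) (exp_twoPiI_mul_I_div y)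
  have hdop := hq.dop_eq_ofReal_tsum (I_div_mem_UHP hy) (exp_twoPiI_mul_I_div y)
  have key := hw.one_sub_dop_div hk hd (a := 0) (b := -1) (c := 1) (d := 0) (by norm_num) hz
    (by rw [hS, hdop]; exact_mod_cast hQ)
  rw [hS, hden, hval, hdop] at key
  rw [hdop, key]
  generalize (∑' n, c n * _ ^ n : ℝ) = P
  generalize (∑' n : ℕ, n * c n * _ ^ n : ℝ) = Q
  push_cast [twoPiI]
  field_simp
  ring_nf

theorem IsModularForm.one_sub_dop_div_half_add_I_mul (hk : Even k)
    (hf : IsModularForm k f fun n => c n) (hy : 0 < y)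
    (hQ : ∑' n : ℕ, n * c n * (-Real.exp (-(Real.pi / (2 * y)))) ^ n ≠ 0) :
    1 - Dop f (1 / 2 + I * y) / ((I / (2 * y)) ^ (k + 2) * Dop f (1 / 2 + I / (4 * y))) =
      (2 * k / Real.pi * y * ((∑' n, c n * (-Real.exp (-(Real.pi / (2 * y)))) ^ n) /
        ∑' n : ℕ, n * c n * (-Real.exp (-(Real.pi / (2 * y)))) ^ n) : ℝ) := by
  obtain ⟨hd, hw, hq⟩ := hf
  have hy' : (y : ℂ) ≠ 0 := ofReal_ne_zero.2 hy.ne'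
  have hz : 1 / 2 + I * y ∈ UHP := by simpa [UHP] using hy
  have hz' : 1 / 2 + I / (4 * y) ∈ UHP := by
    show 0 < (1 / 2 + I / (4 * y)).im
    simp only [add_im, div_im]
    simp
    positivity
  have hγ : ((1 : ℤ) * (1 / 2 + I * y) + (-1 : ℤ) : ℂ) / ((2 : ℤ) * (1 / 2 + I * y) + (-1 : ℤ)) =
      1 / 2 + I / (4 * y) := by
    push_cast
    field_simp
    ring_nf
    simp
  have hden : -(((2 : ℤ) : ℂ) * (1 / 2 + I * y) + (-1 : ℤ))⁻¹ = I / (2 * y) := by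
    push_cast
    field_simp
    ring_nf
    simp
  have hval := hq.eq_ofReal_tsum hz' (exp_twoPiI_mul_half_add_I_div y)
  have hdop := hq.dop_eq_ofReal_tsum hz' (exp_twoPiI_mul_half_add_I_div y)
  have key := hw.one_sub_dop_div hk hd (a := 1) (b := -1) (c := 2) (d := -1) (by norm_num) hz
    (by rw [hγ, hdop]; exact_mod_cast hQ)
  rw [hγ, hden, hval, hdop] at key
  rw [hdop, key]
  generalize (∑' n, c n * _ ^ n : ℝ) = P
  generalize (∑' n : ℕ, n * c n * _ ^ n : ℝ) = Q
  push_cast [twoPiI]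
  field_simp
  ring_nf

end SpecialPoints

section Asymptotics

theorem tendsto_mul_exp_div_nhdsGT_zero {b : ℝ} (hb : 0 < b) :
    Tendsto (fun y : ℝ => y * Real.exp (b / y)) (𝓝[>] 0) atTop := by
  refine ((tendsto_exp_mul_div_rpow_atTop 1 b hb).comp tendsto_inv_nhdsGT_zero).congr fun y => ?_
  simp [div_eq_mul_inv, mul_comm]

theorem tendsto_mul_exp_neg_div_nhdsGT_zero {σ a : ℝ} (hσ : σ ≠ 0) (ha : 0 < a) :
    Tendsto (fun y : ℝ => σ * Real.exp (-(a / y))) (𝓝[>] 0) (𝓝[≠] 0) := by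
  refine tendsto_nhdsWithin_iff.2 ⟨?_, Eventually.of_forall fun y => ?_⟩
  · have h := Real.tendsto_exp_atBot.comp <| tendsto_neg_atTop_atBot.comp <|
      (tendsto_inv_nhdsGT_zero (𝕜 := ℝ)).const_mul_atTop ha
    simpa [div_eq_mul_inv] using h.const_mul σ
  · exact mul_ne_zero hσ (Real.exp_pos _).ne'

theorem tendsto_pow_mul_div_mul_exp_pow_atTop {σ C a : ℝ} (hσ : σ ≠ 0) (hC : 0 < C) (ha : 0 < a)
    {m : ℕ} (hm : m ≠ 0) :
    Tendsto (fun y : ℝ => σ ^ m * (C * y) / (σ * Real.exp (-(a / y))) ^ m) (𝓝[>] 0) atTop := by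
  refine ((tendsto_mul_exp_div_nhdsGT_zero (b := a * m) (by positivity)).const_mul_atTop hC).congr
    fun y => ?_
  rw [mul_pow, ← Real.exp_nat_mul, show (m : ℝ) * -(a / y) = -(a * m / y) by ring, Real.exp_neg]
  field_simp

theorem eventually_ne_zero_of_tendsto_div_pow {Q : ℝ → ℝ} {q : ℝ} {m : ℕ}
    (hQ : Tendsto (fun x => Q x / x ^ m) (𝓝[≠] 0) (𝓝 q)) (hq : q ≠ 0) :
    ∀ᶠ x in 𝓝[≠] 0, Q x ≠ 0 :=
  (hQ.eventually_ne hq).mono fun x hx h => hx (by simp [h])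

theorem tendsto_mul_mul_div_atTop {l : Filter ℝ} {P Q u g : ℝ → ℝ} {p q ε : ℝ} {m : ℕ}
    (hP : Tendsto P (𝓝[≠] 0) (𝓝 p)) (hQ : Tendsto (fun x => Q x / x ^ m) (𝓝[≠] 0) (𝓝 q))
    (hε : 0 < ε * (p / q)) (hu : Tendsto u l (𝓝[≠] 0))
    (hg : Tendsto (fun y => g y / u y ^ m) l atTop) :
    Tendsto (fun y => ε * (g y * (P (u y) / Q (u y)))) l atTop := by
  have hq : q ≠ 0 := by rintro rfl; simp at hε
  have hlim := ((hP.comp hu).div (hQ.comp hu) hq).const_mul ε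
  refine (hlim.pos_mul_atTop hε hg).congr' ?_
  filter_upwards [hu self_mem_nhdsWithin] with y hu₀
  have hum : u y ^ m ≠ 0 := pow_ne_zero _ hu₀
  simp only [Pi.div_apply, Function.comp_apply, div_div_eq_mul_div]
  field_simp

theorem sign_mul_mul_div_mul_pos {x y n : ℝ} (hx : x ≠ 0) (hy : y ≠ 0) (hn : 0 < n) :
    0 < Real.sign (x * y) * (x / (n * y)) := by
  rw [show x / (n * y) = x * y / (n * y ^ 2) by field_simp, ← mul_div_assoc]
  exact div_pos (Real.sign_mul_pos_of_ne_zero _ (mul_ne_zero hx hy)) (by positivity)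

theorem eventually_im_eq_zero_and_tendsto_sign_mul_one_sub_re {c : ℕ → ℝ} {n₀ : ℕ}
    {σ a C : ℝ} {r : ℝ → ℂ}
    (hP : Tendsto (fun x => ∑' n, c n * x ^ n) (𝓝[≠] 0) (𝓝 (c 0)))
    (hQ : Tendsto (fun x => (∑' n : ℕ, n * c n * x ^ n) / x ^ n₀) (𝓝[≠] 0) (𝓝 (n₀ * c n₀)))
    (h0 : c 0 ≠ 0) (hn₀ : n₀ ≠ 0) (hcn₀ : c n₀ ≠ 0) (hσ : σ ≠ 0) (ha : 0 < a) (hC : 0 < C)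
    (hr : ∀ y, 0 < y → ∑' n : ℕ, n * c n * (σ * Real.exp (-(a / y))) ^ n ≠ 0 →
      1 - r y = (C * y * ((∑' n, c n * (σ * Real.exp (-(a / y))) ^ n) /
        ∑' n : ℕ, n * c n * (σ * Real.exp (-(a / y))) ^ n) : ℝ)) :
    (∀ᶠ y in 𝓝[>] 0, (r y).im = 0) ∧
      Tendsto (fun y => σ ^ n₀ * Real.sign (c 0 * c n₀) * (1 - r y).re) (𝓝[>] 0) atTop := by
  have hu := tendsto_mul_exp_neg_div_nhdsGT_zero hσ ha
  have hn₀' : (0 : ℝ) < n₀ := by positivity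
  have hr' : ∀ᶠ y in 𝓝[>] 0, 1 - r y = _ :=
    ((hu.eventually (eventually_ne_zero_of_tendsto_div_pow hQ (by positivity))).and
      self_mem_nhdsWithin).mono fun y h => hr y h.2 h.1
  refine ⟨hr'.mono fun y h => by simpa using congrArg Complex.im h, ?_⟩
  refine (tendsto_mul_mul_div_atTop hP hQ (sign_mul_mul_div_mul_pos h0 hcn₀ hn₀') hu
    (tendsto_pow_mul_div_mul_exp_pow_atTop hσ hC ha hn₀)).congr' (hr'.mono fun y h => ?_)
  dsimp only
  rw [h, Complex.ofReal_re]
  ring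

end Asymptotics

section WeightZero

open UpperHalfPlane MatrixGroups

theorem IsWeaklyModular.apply_smul {k : ℤ} {f : ℂ → ℂ} (hf : IsWeaklyModular k f)
    (γ : SL(2, ℤ)) (τ : ℍ) : f (γ • τ : ℍ) = denom γ τ ^ k * f τ := by
  have hdet := γ.det_coe
  rw [Matrix.det_fin_two] at hdet
  rw [coe_specialLinearGroup_apply]
  simpa [denom] using hf (γ 0 0) (γ 0 1) (γ 1 0) (γ 1 1) hdet τ τ.2

theorem exists_exp_twoPiI_mul_eq {w : ℂ} (hw₀ : w ≠ 0) (hw₁ : ‖w‖ < 1) :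
    ∃ τ : ℍ, Complex.exp (twoPiI * τ) = w := by
  refine ⟨⟨_, Function.Periodic.im_invQParam_pos_of_norm_lt_one one_pos hw₁ hw₀⟩, ?_⟩
  simpa [Function.Periodic.qParam, twoPiI, mul_assoc] using
    Function.Periodic.qParam_right_inv one_ne_zero hw₀

theorem IsModularForm.eqOn_const_of_weight_zero {f : ℂ → ℂ} {a : ℕ → ℂ}
    (hf : IsModularForm 0 f a) : Set.EqOn f (fun _ => a 0) UHP := by
  obtain ⟨-, hw, hq⟩ := hf
  set F := fun w : ℂ => ∑' n, a n * w ^ n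
  have hfF : ∀ z ∈ UHP, f z = F (Complex.exp (twoPiI * z)) := fun z hz => hq.eq_tsum hz
  have hF : DifferentiableOn ℂ F (ball 0 1) := fun w hw =>
    (hasDerivAt_tsum_mul_pow (fun r => hq.summable_norm_mul_pow)
      (mem_ball_zero_iff.1 hw)).differentiableAt.differentiableWithinAt
  have hR : Real.exp (-Real.pi) < 1 := Real.exp_lt_one_iff.2 (neg_lt_zero.2 Real.pi_pos)
  have hbound : ∀ w ∈ ball (0 : ℂ) 1,
      ∃ w' ∈ closedBall (0 : ℂ) (Real.exp (-Real.pi)), ‖F w‖ ≤ ‖F w'‖ := by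
    intro w hw₁
    rcases eq_or_ne w 0 with rfl | hw₀
    · exact ⟨0, by simp [(Real.exp_pos _).le], le_rfl⟩
    obtain ⟨τ, rfl⟩ := exists_exp_twoPiI_mul_eq hw₀ (mem_ball_zero_iff.1 hw₁)
    obtain ⟨γ, hγ⟩ := ModularGroup.exists_one_half_le_im_smul τ
    refine ⟨Complex.exp (twoPiI * (γ • τ : ℍ)), ?_, le_of_eq ?_⟩
    · rw [mem_closedBall_zero_iff, norm_exp_twoPiI_mul, Real.exp_le_exp]
      have : 1 / 2 ≤ (γ • τ).im := hγ
      have := Real.pi_pos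
      simp only [coe_im]
      nlinarith
    · rw [← hfF τ τ.2, ← hfF _ (γ • τ).2, hw.apply_smul]
      simp
  have hconst := Complex.eq_const_of_exists_le hF (Real.exp_pos _).le hR hbound
  intro z hz
  rw [hfF z hz, hconst (mem_ball_zero_iff.2 (norm_exp_twoPiI_mul_lt_one hz))]
  simp only [F, Function.const_apply]
  rw [tsum_eq_single 0 fun n hn => by simp [hn]]
  simp

theorem IsModularForm.dop_eq_zero_of_weight_zero {f : ℂ → ℂ} {a : ℕ → ℂ}
    (hf : IsModularForm 0 f a) {z : ℂ} (hz : z ∈ UHP) : Dop f z = 0 := by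
  have hconst : f =ᶠ[𝓝 z] fun _ => a 0 :=
    Filter.eventually_of_mem (isOpen_UHP.mem_nhds hz) hf.eqOn_const_of_weight_zero
  rw [Dop, hconst.deriv_eq, deriv_const, mul_zero]

theorem IsModularForm.weight_ne_zero {k : ℕ} {f : ℂ → ℂ} {c : ℕ → ℝ}
    (hf : IsModularForm k f fun n => c n) {n₀ : ℕ} (hn₀ : n₀ ≠ 0) (hcn₀ : c n₀ ≠ 0)
    (hmin : ∀ i, 1 ≤ i → i < n₀ → c i = 0) : k ≠ 0 := by
  rintro rfl
  have hQ := (hf.2.2.tendsto_tsum_nat_mul_mul_pow_div_pow hmin).comp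
    (tendsto_mul_exp_neg_div_nhdsGT_zero one_ne_zero Real.two_pi_pos)
  have hzero : ∀ y : ℝ, 0 < y → ∑' n : ℕ, n * c n * Real.exp (-(2 * Real.pi / y)) ^ n = 0 := by
    intro y hy
    have hdop := hf.2.2.dop_eq_ofReal_tsum (I_div_mem_UHP hy) (exp_twoPiI_mul_I_div y)
    rw [IsModularForm.dop_eq_zero_of_weight_zero (by simpa using hf) (I_div_mem_UHP hy)] at hdop
    exact_mod_cast hdop.symm
  have hlim := tendsto_nhds_unique_of_eventuallyEq hQ (tendsto_const_nhds (x := (0 : ℝ)))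
    (eventually_mem_nhdsWithin.mono fun y hy => by
      simp only [Function.comp_apply, one_mul, hzero y hy, zero_div])
  simp [hn₀, hcn₀] at hlim

end WeightZero

/-- For a non-cuspidal nonconstant modular form `f` of weight `k` with
real Fourier coefficients (first two nonzero coefficients `c 0` and `c n₀`,
`ε'_f = sign(c 0 · c n₀)`, `ε_f = (-1)^{n₀} ε'_f`), the quotients
`r₀(y) = Df(iy)/((i/y)^{k+2} Df(i/y))` and
`r₁(y) = Df(1/2+iy)/((i/(2y))^{k+2} Df(1/2+i/(4y)))` are real for small `y > 0` and
satisfy `ε'_f (1 - r₀(y)) → +∞` and `ε_f (1 - r₁(y)) → +∞` as `y → 0⁺`. -/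
theorem stmt15 (k : ℕ) (hke : Even k) (f : ℂ → ℂ) (c : ℕ → ℝ)
    (hf : IsModularForm k f (fun n => ((c n : ℝ) : ℂ)))
    (h0 : c 0 ≠ 0) (n₀ : ℕ) (hn₀ : 1 ≤ n₀) (hcn₀ : c n₀ ≠ 0)
    (hmin : ∀ i, 1 ≤ i → i < n₀ → c i = 0)
    (r₀ r₁ : ℝ → ℂ)
    (hr₀ : ∀ y : ℝ, r₀ y =
      Dop f (Complex.I * y) /
        ((Complex.I / (y : ℂ)) ^ (k + 2) * Dop f (Complex.I / (y : ℂ))))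
    (hr₁ : ∀ y : ℝ, r₁ y =
      Dop f ((1/2 : ℂ) + Complex.I * y) /
        ((Complex.I / (2 * (y : ℂ))) ^ (k + 2) *
          Dop f ((1/2 : ℂ) + Complex.I / (4 * (y : ℂ))))) :
    (∀ᶠ y in nhdsWithin (0 : ℝ) (Set.Ioi 0), (r₀ y).im = 0 ∧ (r₁ y).im = 0) ∧
    Tendsto (fun y => Real.sign (c 0 * c n₀) * (1 - r₀ y).re)
      (nhdsWithin (0 : ℝ) (Set.Ioi 0)) atTop ∧
    Tendsto (fun y => (-1 : ℝ) ^ n₀ * Real.sign (c 0 * c n₀) * (1 - r₁ y).re)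
      (nhdsWithin (0 : ℝ) (Set.Ioi 0)) atTop := by
  have hn₀' : n₀ ≠ 0 := by omega
  have hk : (0 : ℝ) < k := Nat.cast_pos.2 (Nat.pos_of_ne_zero (hf.weight_ne_zero hn₀' hcn₀ hmin))
  have hP := hf.2.2.tendsto_tsum_mul_pow
  have hQ := hf.2.2.tendsto_tsum_nat_mul_mul_pow_div_pow hmin
  obtain ⟨him₀, hlim₀⟩ := eventually_im_eq_zero_and_tendsto_sign_mul_one_sub_re hP hQ h0 hn₀' hcn₀
    one_ne_zero Real.two_pi_pos (C := k / (2 * Real.pi)) (by positivity) (r := r₀)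
    fun y hy hQy => by
      simpa [hr₀] using hf.one_sub_dop_div_I_mul hke hy (by simpa using hQy)
  obtain ⟨him₁, hlim₁⟩ := eventually_im_eq_zero_and_tendsto_sign_mul_one_sub_re hP hQ h0 hn₀'
    hcn₀ (neg_ne_zero.2 one_ne_zero) (half_pos Real.pi_pos) (C := 2 * k / Real.pi) (by positivity)
    (r := r₁) fun y hy hQy => by
      simpa [hr₁, div_div] using
        hf.one_sub_dop_div_half_add_I_mul hke hy (by simpa [div_div] using hQy)
  exact ⟨him₀.and him₁, by simpa using hlim₀, hlim₁⟩
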